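/- arXiv:2604.09027 — 4 statements merged into one kernel-verified Lean document; each statement's English description precedes it below -/
import Mathlib

section
/- Let k be a field, V a finite-dimensional k-vector space, 0 < r ≤ dim V an integer, and w ∈ ⋀^r V a nonzero vector spanning a line L. Define α : V → ⋀^{r+1} V by α(v) = v ∧ w. Then ⋀^r (ker α) ⊆ L; in particular, if dim ker α = r, then ⋀^r (ker α) = L. -/
/-!
If `v₁, …, vₘ` are linearly independent and `vᵢ ∧ w = 0` for all `i`, then `w` is divisible by
`v₁ ∧ ⋯ ∧ vₘ`: contracting with a functional `φ` dual to `v₁` gives `w = v₁ ∧ (φ ⌋ w)`, and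
`φ ⌋ w` is again killed by `v₂, …, vₘ`. For `m = r` and `w` of degree `r`, comparing degrees
shows that the cofactor is a scalar, so `w` is a multiple of `v₁ ∧ ⋯ ∧ vᵣ`; a dependent family
has wedge product `0`.
-/

theorem LinearIndependent.exists_dual_apply_eq_one_and_eq_zero {k V ι : Type*} [Field k]
    [AddCommGroup V] [Module k V] {v : ι → V} (hv : LinearIndependent k v) (i : ι) :
    ∃ φ : Module.Dual k V, φ (v i) = 1 ∧ ∀ j ≠ i, φ (v j) = 0 := by
  obtain ⟨φ, hφ, hφi⟩ := LinearMap.exists_extend_of_notMem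
    (0 : Submodule.span k (v '' {j | j ≠ i}) →ₗ[k] k) (hv.notMem_span_image (x := i) (by simp)) 1
  refine ⟨φ, hφi, fun j hj => ?_⟩
  simpa using LinearMap.congr_fun hφ ⟨v j, Submodule.subset_span ⟨j, hj, rfl⟩⟩

namespace ExteriorAlgebra

section CommRing

variable {R M : Type*} [CommRing R] [AddCommGroup M] [Module R M]

theorem ι_mul_contractLeft_of_ι_mul_eq_zero (φ : Module.Dual R M) {a : M}
    {w : ExteriorAlgebra R M} (h : ι R a * w = 0) :
    ι R a * CliffordAlgebra.contractLeft φ w = φ a • w := by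
  have := CliffordAlgebra.contractLeft_ι_mul φ a w
  rwa [h, map_zero, eq_comm, sub_eq_zero, eq_comm] at this

theorem mem_span_singleton_of_eq_mul {r : ℕ} {p u w : ExteriorAlgebra R M}
    (hp : p ∈ ⋀[R]^r M) (hw : w ∈ ⋀[R]^r M) (h : w = p * u) : w ∈ R ∙ p := by
  classical
  let 𝒜 : ℕ → Submodule R (ExteriorAlgebra R M) := fun i => ⋀[R]^i M
  have hw_eq : w = p * DirectSum.decompose 𝒜 u 0 := by
    rw [← DirectSum.coe_decompose_mul_add_of_left_mem 𝒜 hp, add_zero, ← h,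
      DirectSum.decompose_of_mem_same 𝒜 hw]
  obtain ⟨c, hc⟩ : (DirectSum.decompose 𝒜 u 0 : ExteriorAlgebra R M) ∈
      Set.range (algebraMap R (ExteriorAlgebra R M)) :=
    Submodule.mem_one.mp <|
      pow_zero (LinearMap.range (ι R : M →ₗ[R] _)) ▸ (DirectSum.decompose 𝒜 u 0).2
  rw [hw_eq, ← hc, ← Algebra.commutes, ← Algebra.smul_def]
  exact Submodule.smul_mem _ c (Submodule.mem_span_singleton_self p)

end CommRing

variable {k V : Type*} [Field k] [AddCommGroup V] [Module k V]

theorem exists_eq_ιMulti_mul_of_ι_mul_eq_zero {n : ℕ} {v : Fin n → V}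
    (hv : LinearIndependent k v) {w : ExteriorAlgebra k V} (h : ∀ i, ι k (v i) * w = 0) :
    ∃ u, w = ιMulti k n v * u := by
  induction n generalizing w with
  | zero => exact ⟨w, by simp⟩
  | succ n ih =>
    obtain ⟨φ, hφ₀, hφ⟩ := hv.exists_dual_apply_eq_one_and_eq_zero 0
    have hw : w = ι k (v 0) * CliffordAlgebra.contractLeft φ w := by
      rw [ι_mul_contractLeft_of_ι_mul_eq_zero φ (h 0), hφ₀, one_smul]
    have htail : ∀ i, ι k (Matrix.vecTail v i) * CliffordAlgebra.contractLeft φ w = 0 :=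
      fun i => by
        rw [Matrix.vecTail, Function.comp_apply, ι_mul_contractLeft_of_ι_mul_eq_zero φ (h _),
          hφ _ (Fin.succ_ne_zero i), zero_smul]
    obtain ⟨u, hu⟩ := ih (hv.comp Fin.succ (Fin.succ_injective n)) htail
    exact ⟨u, by rw [ιMulti_succ_apply, mul_assoc, Matrix.vecTail, ← hu, ← hw]⟩

theorem span_singleton_ιMulti_eq {r : ℕ} {w : ExteriorAlgebra k V} (hw : w ∈ ⋀[k]^r V)
    (hw0 : w ≠ 0) {v : Fin r → V} (hv : LinearIndependent k v) (h : ∀ i, ι k (v i) * w = 0) :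
    k ∙ ιMulti k r v = k ∙ w := by
  obtain ⟨u, hu⟩ := exists_eq_ιMulti_mul_of_ι_mul_eq_zero hv h
  obtain ⟨c, rfl⟩ := Submodule.mem_span_singleton.mp
    (mem_span_singleton_of_eq_mul (ιMulti_range k r ⟨v, rfl⟩) hw hu)
  have hc : c ≠ 0 := by rintro rfl; simp at hw0
  rw [Submodule.span_singleton_smul_eq hc.isUnit]

end ExteriorAlgebra

open ExteriorAlgebra

theorem stmt_0_general {k V : Type*} [Field k] [AddCommGroup V] [Module k V]
    (r : ℕ) (w : ExteriorAlgebra k V) (hw : w ∈ ⋀[k]^r V) (hw0 : w ≠ 0) :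
    Submodule.span k {x : ExteriorAlgebra k V | ∃ v : Fin r → V,
        (∀ i, ExteriorAlgebra.ι k (v i) * w = 0) ∧
        x = (List.ofFn fun i => ExteriorAlgebra.ι k (v i)).prod}
      ≤ Submodule.span k {w} ∧
    (Module.finrank k
        (LinearMap.ker ((LinearMap.mulRight k w).comp
          (ExteriorAlgebra.ι k : V →ₗ[k] ExteriorAlgebra k V))) = r →
      Submodule.span k {x : ExteriorAlgebra k V | ∃ v : Fin r → V,
          (∀ i, ExteriorAlgebra.ι k (v i) * w = 0) ∧
          x = (List.ofFn fun i => ExteriorAlgebra.ι k (v i)).prod}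
        = Submodule.span k {w}) := by
  have hle : Submodule.span k {x : ExteriorAlgebra k V | ∃ v : Fin r → V,
      (∀ i, ι k (v i) * w = 0) ∧ x = (List.ofFn fun i => ι k (v i)).prod} ≤ k ∙ w := by
    rw [Submodule.span_le]
    rintro _ ⟨v, hv, rfl⟩
    rw [← ιMulti_apply]
    by_cases hli : LinearIndependent k v
    · rw [← span_singleton_ιMulti_eq hw hw0 hli hv]
      exact Submodule.mem_span_singleton_self _
    · rw [AlternatingMap.map_linearDependent _ v hli]
      exact zero_mem _
  refine ⟨hle, fun hker => le_antisymm hle ?_⟩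
  obtain ⟨b, hb⟩ := exists_linearIndependent_of_le_finrank hker.ge
  have hbw : ∀ i, ι k (b i : V) * w = 0 := fun i => (b i).2
  rw [← span_singleton_ιMulti_eq hw hw0 (hb.map' _ (Submodule.ker_subtype _)) hbw]
  exact Submodule.span_mono (Set.singleton_subset_iff.2 ⟨_, hbw, ιMulti_apply ..⟩)

/-- if `w` is a nonzero element of `⋀^r V` spanning the line `L`, and
`α : V → ⋀^(r+1) V` is `v ↦ ι v * w`, then the span of `r`-fold wedge products of
elements of `ker α` is contained in `L`; if moreover `dim ker α = r`, it equals `L`. -/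
theorem stmt_0 {k V : Type*} [Field k] [AddCommGroup V] [Module k V]
    [FiniteDimensional k V] (r : ℕ) (hr : 0 < r) (hrn : r ≤ Module.finrank k V)
    (w : ExteriorAlgebra k V) (hw : w ∈ ⋀[k]^r V) (hw0 : w ≠ 0) :
    Submodule.span k {x : ExteriorAlgebra k V | ∃ v : Fin r → V,
        (∀ i, ExteriorAlgebra.ι k (v i) * w = 0) ∧
        x = (List.ofFn fun i => ExteriorAlgebra.ι k (v i)).prod}
      ≤ Submodule.span k {w} ∧
    (Module.finrank k
        (LinearMap.ker ((LinearMap.mulRight k w).comp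
          (ExteriorAlgebra.ι k : V →ₗ[k] ExteriorAlgebra k V))) = r →
      Submodule.span k {x : ExteriorAlgebra k V | ∃ v : Fin r → V,
          (∀ i, ExteriorAlgebra.ι k (v i) * w = 0) ∧
          x = (List.ofFn fun i => ExteriorAlgebra.ι k (v i)).prod}
        = Submodule.span k {w}) :=
  stmt_0_general r w hw hw0
end

section
/- Let k be a field, V a finite-dimensional k-vector space, w ∈ ⋀^r V nonzero spanning a line L, and α : V → ⋀^{r+1} V the map v ↦ v ∧ w. If W ⊆ V is an r-dimensional subspace with ⋀^r W = L, then W = ker α. -/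
/-!
Choose a basis `e` of `W`. Its wedge `E` is a nonzero element of `L`, so `w` is a nonzero multiple
of `E` and `ker α` is the kernel of `v ↦ v ∧ E`. Over a field a wedge of vectors vanishes exactly
when they are linearly dependent, so `v ∧ E = 0` iff `v ∈ span e = W`.
-/

open ExteriorAlgebra

namespace ExteriorAlgebra

variable {K M : Type*} [Field K] [AddCommGroup M] [Module K M]

theorem ιMulti_ne_zero_of_linearIndependent {n : ℕ} {v : Fin n → M}
    (hv : LinearIndependent K v) : ιMulti K n v ≠ 0 := by
  -- `ιMulti v` is the member of the independent family `ιMulti_family v` indexed by all of `Fin n`.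
  have hfam := (exteriorPower.ιMulti_family_linearIndependent_field (n := n) hv).ne_zero
    (Set.powersetCard.ofFinEmbEquiv (RelEmbedding.refl (· ≤ ·)))
  rwa [ne_eq, ← Submodule.coe_eq_zero, exteriorPower.ιMulti_family_apply_coe, ιMulti_family,
    Equiv.symm_apply_apply] at hfam

theorem ιMulti_eq_zero_iff {n : ℕ} {v : Fin n → M} :
    ιMulti K n v = 0 ↔ ¬LinearIndependent K v :=
  ⟨fun h hv => ιMulti_ne_zero_of_linearIndependent hv h, (ιMulti K n).map_linearDependent v⟩

theorem ι_mul_ιMulti_eq_zero_iff {n : ℕ} {v : Fin n → M} (hv : LinearIndependent K v) (x : M) :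
    ι K x * ιMulti K n v = 0 ↔ x ∈ Submodule.span K (Set.range v) := by
  have hcons : ι K x * ιMulti K n v = ιMulti K (n + 1) (Fin.cons x v) := by
    rw [ιMulti_succ_apply, Fin.cons_zero]
    rfl
  rw [hcons, ιMulti_eq_zero_iff, linearIndependent_finCons, not_and_not_right, imp_iff_right hv]

theorem ker_mulRight_ιMulti_comp_ι {n : ℕ} {v : Fin n → M} (hv : LinearIndependent K v) :
    LinearMap.ker ((LinearMap.mulRight K (ιMulti K n v)).comp (ι K)) =
      Submodule.span K (Set.range v) :=
  Submodule.ext (ι_mul_ιMulti_eq_zero_iff hv)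

theorem ker_mulRight_smul_comp_ι (w : ExteriorAlgebra K M) {c : K} (hc : c ≠ 0) :
    LinearMap.ker ((LinearMap.mulRight K (c • w)).comp (ι K)) =
      LinearMap.ker ((LinearMap.mulRight K w).comp (ι K)) := by
  ext x
  simp only [LinearMap.mem_ker, LinearMap.comp_apply, LinearMap.mulRight_apply, mul_smul_comm,
    smul_eq_zero, hc, false_or]

end ExteriorAlgebra

theorem stmt_1_general {k V : Type*} [Field k] [AddCommGroup V] [Module k V]
    [FiniteDimensional k V] (r : ℕ)
    (w : ExteriorAlgebra k V)
    (W : Submodule k V) (hWr : Module.finrank k W = r)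
    (hWL : Submodule.span k {x : ExteriorAlgebra k V | ∃ v : Fin r → V,
        (∀ i, v i ∈ W) ∧
        x = (List.ofFn fun i => ExteriorAlgebra.ι k (v i)).prod}
      = Submodule.span k {w}) :
    W = LinearMap.ker ((LinearMap.mulRight k w).comp
      (ExteriorAlgebra.ι k : V →ₗ[k] ExteriorAlgebra k V)) := by
  let b := Module.finBasisOfFinrankEq k W hWr
  let e : Fin r → V := W.subtype ∘ b
  have he : LinearIndependent k e := b.linearIndependent.map' W.subtype W.ker_subtype
  have he_span : Submodule.span k (Set.range e) = W := by
    rw [Set.range_comp, Submodule.span_image, b.span_eq, Submodule.map_subtype_top]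
  have hE : ιMulti k r e ∈ Submodule.span k {w} :=
    hWL ▸ Submodule.subset_span ⟨e, fun i => (b i).2, ιMulti_apply e⟩
  obtain ⟨c, hc⟩ := Submodule.mem_span_singleton.mp hE
  have hc0 : c ≠ 0 := by
    rintro rfl
    exact ιMulti_ne_zero_of_linearIndependent he (by rw [← hc, zero_smul])
  rw [← ker_mulRight_smul_comp_ι w hc0, hc, ker_mulRight_ιMulti_comp_ι he, he_span]

/-- if `w ∈ ⋀^r V` is nonzero spanning `L`, `α(v) = v ∧ w`, and `W ⊆ V`
is an `r`-dimensional subspace with `⋀^r W = L`, then `W = ker α`. -/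
theorem stmt_1 {k V : Type*} [Field k] [AddCommGroup V] [Module k V]
    [FiniteDimensional k V] (r : ℕ) (hr : 0 < r) (hrn : r ≤ Module.finrank k V)
    (w : ExteriorAlgebra k V) (hw : w ∈ ⋀[k]^r V) (hw0 : w ≠ 0)
    (W : Submodule k V) (hWr : Module.finrank k W = r)
    (hWL : Submodule.span k {x : ExteriorAlgebra k V | ∃ v : Fin r → V,
        (∀ i, v i ∈ W) ∧
        x = (List.ofFn fun i => ExteriorAlgebra.ι k (v i)).prod}
      = Submodule.span k {w}) :
    W = LinearMap.ker ((LinearMap.mulRight k w).comp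
      (ExteriorAlgebra.ι k : V →ₗ[k] ExteriorAlgebra k V)) :=
  stmt_1_general r w W hWr hWL
end

section
/- Let R be a local ring with maximal ideal m, let ∂ : R → R be a derivation, and let ord : R → ℕ ∪ {∞} be a discrete valuation on R satisfying ord(f) < ord(∂(f)) for all f ∈ m with ∂(f) ≠ 0 (strict increase of order under ∂). Suppose f ∈ m satisfies ∂(f) ≡ μ f mod m^2 for some μ ≠ 0, and that ord(f) is maximal among ord(g) over all g ≡ λf mod m^2 with λ ≠ 0, and this maximum is finite. Then ord(f) ≥ ord(∂(f)), contradicting the hypothesis; hence no such valuation exists. -/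
/-- the valuation-theoretic contradiction in the proof that a
non-log-canonical vector field has nilpotent linear part: if `ord` strictly
increases under the derivation `D` on the maximal ideal, `D f ≡ μ f mod m²` with
`μ` a unit, and `ord f` is finite and maximal among `ord g` for `g ≡ λ f mod m²`
(`λ` a unit), then we reach a contradiction. -/
theorem stmt_9 {R : Type*} [CommRing R] [IsLocalRing R]
    (D : Derivation ℤ R R) (ord : R → ℕ∞)
    (h0 : ord 0 = ⊤)
    (hinc : ∀ f ∈ IsLocalRing.maximalIdeal R, D f ≠ 0 → ord f < ord (D f))
    (f : R) (hf : f ∈ IsLocalRing.maximalIdeal R)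
    (μ : R) (hμ : IsUnit μ)
    (heig : D f - μ * f ∈ (IsLocalRing.maximalIdeal R) ^ 2)
    (hfin : ord f ≠ ⊤)
    (hmax : ∀ g lam : R, IsUnit lam →
      g - lam * f ∈ (IsLocalRing.maximalIdeal R) ^ 2 → ord g ≤ ord f) :
    False := by
  have h2 := hmax (D f) μ hμ heig
  by_cases h : D f = 0
  · rw [h, h0] at h2
    exact hfin (top_le_iff.mp h2)
  · exact absurd h2 (not_le.mpr (hinc f hf h))
end

section
/- Let R be a commutative ring, let ∂ : R → R be a derivation, and let x, u ∈ R with u a unit, k_1, k_i positive integers, λ_1, λ_i scalars, such that ∂(x_1) = k_1 x_1 (after rescaling) and ∂(x_i) = λ_i x_i, and x_i^{k_1} = u·x_1^{k_i}. If D is a divisorial valuation with ord_D(x_1) = k_1 ≥ 1, ord_D(x_i) = k_i, and ord_D(∂(u)) ≥ 1, then λ_i = k_i. -/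
private lemma pow_deriv {K R : Type*} [Field K] [CommRing R] [Algebra K R]
    (D : Derivation K R R) (a : R) (c : K) (hD : D a = c • a) (n : ℕ) (hn : 0 < n) :
    D (a ^ n) = ((n : K) * c) • a ^ n := by
  rw [Derivation.leibniz_pow, hD, smul_comm (a ^ (n - 1)) c, smul_eq_mul, ← pow_succ,
    Nat.sub_add_cancel hn, ← Nat.cast_smul_eq_nsmul K n, smul_smul]

/-- if `D x₁ = k₁ x₁`, `D xᵢ = λᵢ xᵢ`, `xᵢ^{k₁} = u·x₁^{kᵢ}` with `u`
a unit, and `v` is a divisorial valuation with `v(x₁) = k₁ ≥ 1`, `v(xᵢ) = kᵢ` and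
`v(D u) ≥ 1`, then `λᵢ = kᵢ`. -/
theorem stmt_10 {K R : Type*} [Field K] [CharZero K] [CommRing R] [Algebra K R]
    (D : Derivation K R R) (v : R → ℕ∞)
    (x1 xi u : R) (k1 ki : ℕ) (hk1 : 0 < k1) (hki : 0 < ki)
    (lami : K) (hu : IsUnit u)
    (hx1 : D x1 = (k1 : K) • x1)
    (hxi : D xi = lami • xi)
    (hrel : xi ^ k1 = u * x1 ^ ki)
    (hmul : ∀ a b : R, v (a * b) = v a + v b)
    (hsmul : ∀ c : K, c ≠ 0 → ∀ a : R, v (c • a) = v a)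
    (hvx1 : v x1 = (k1 : ℕ∞)) (hvxi : v xi = (ki : ℕ∞))
    (hvdu : 1 ≤ v (D u)) :
    lami = (ki : K) := by
  by_contra hne
  have hDL : D (xi ^ k1) = ((k1 : K) * lami) • xi ^ k1 := pow_deriv D xi lami hxi k1 hk1
  have hDR : D (u * x1 ^ ki) = ((k1 : K) * (ki : K)) • (u * x1 ^ ki) + x1 ^ ki * D u := by
    rw [Derivation.leibniz, pow_deriv D x1 (k1 : K) hx1 ki hki, smul_comm u, smul_eq_mul,
      mul_comm (ki : K), smul_eq_mul]
  have heq : ((k1 : K) * lami) • (u * x1 ^ ki) =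
      ((k1 : K) * (ki : K)) • (u * x1 ^ ki) + x1 ^ ki * D u := by
    rw [← hDR, ← hrel, hDL, hrel]
  have key : ((k1 : K) * (lami - (ki : K))) • (u * x1 ^ ki) = x1 ^ ki * D u := by
    rw [mul_sub, sub_smul, sub_eq_iff_eq_add, heq, add_comm]
  have hc : (k1 : K) * (lami - (ki : K)) ≠ 0 := by
    refine mul_ne_zero ?_ (sub_ne_zero.mpr hne)
    exact_mod_cast hk1.ne'
  have hv1 : v (1 : R) = 0 := by
    have h := hmul x1 1
    rw [mul_one, hvx1] at h
    have h0 : (k1 : ℕ∞) + 0 = (k1 : ℕ∞) + v 1 := by rw [add_zero]; exact h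
    exact (WithTop.add_left_cancel WithTop.coe_ne_top h0).symm
  have hvu : v u = 0 := by
    obtain ⟨w, hw⟩ := hu
    have h := hmul (↑w) (↑w⁻¹)
    rw [Units.mul_inv, hv1] at h
    rw [← hw]
    exact (add_eq_zero.mp h.symm).1
  have hvpow : ∀ n : ℕ, v (x1 ^ n) = ((n * k1 : ℕ) : ℕ∞) := by
    intro n
    induction n with
    | zero => simpa using hv1
    | succ m ih => rw [pow_succ, hmul, ih, hvx1]; push_cast; ring
  have hL : v (((k1 : K) * (lami - (ki : K))) • (u * x1 ^ ki)) = ((ki * k1 : ℕ) : ℕ∞) := by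
    rw [hsmul _ hc, hmul, hvu, hvpow, zero_add]
  have hR : v (x1 ^ ki * D u) = ((ki * k1 : ℕ) : ℕ∞) + v (D u) := by
    rw [hmul, hvpow]
  rw [key, hR] at hL
  have h0 : ((ki * k1 : ℕ) : ℕ∞) + v (D u) = ((ki * k1 : ℕ) : ℕ∞) + 0 := by
    rw [add_zero]; exact hL
  have := WithTop.add_left_cancel WithTop.coe_ne_top h0
  simp [this] at hvdu
end
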